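/- Let G be a finite p-group with an abelian maximal subgroup A, let H be a nonabelian maximal subgroup of G, and let φ : H → G be a homomorphism whose kernel contains no nontrivial subgroup normal in G. Then φ is injective. -/

import Mathlib

/-!
Let `N = ker φ` and `C = A ∩ H`, a normal subgroup of index `p` in `H`. The group `N ∩ C` is
normalized by `H`, and by the abelian group `A` containing it; as `G = AH`, it is normal in `G`,
hence trivial. If `N ≠ 1`, maximality of `C` in `H` gives `NC = H`. Then `[H, H] ≤ N` because
`H / N` is a quotient of the abelian `C`, and `[H, H] ≤ C` because `H / C` has order `p`; so
`[H, H] ≤ N ∩ C = 1` and `H` would be abelian.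
-/

namespace Subgroup

variable {G : Type*} [Group G]

theorem isCoatom_of_index_prime {H : Subgroup G} (hH : H.index.Prime) : IsCoatom H := by
  refine ⟨fun h => hH.ne_one (index_eq_one.mpr h), fun K hHK => ?_⟩
  have : H.FiniteIndex := ⟨hH.ne_zero⟩
  have hdvd : K.index ∣ H.index := index_dvd_of_le hHK.le
  rcases hH.eq_one_or_self_of_dvd _ hdvd with h | h
  · exact index_eq_one.mp h
  · exact absurd h (index_strictAnti hHK).ne

theorem normal_map_subtype_of_le_of_isMulCommutative {A H : Subgroup G} [A.Normal]
    [IsMulCommutative A] (hAH : A ⊔ H = ⊤) (M : Subgroup H) [M.Normal]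
    (hMA : M ≤ A.subgroupOf H) : (M.map H.subtype).Normal := by
  have hMA' : M.map H.subtype ≤ A :=
    (map_mono hMA).trans ((subgroupOf_map_subtype A H).le.trans inf_le_left)
  rw [← normalizer_eq_top_iff, eq_top_iff, ← hAH, sup_le_iff]
  constructor
  · exact (le_centralizer A).trans ((centralizer_le hMA').trans (centralizer_le_normalizer _))
  · simpa [normalizer_eq_top, ← MonoidHom.range_eq_map] using le_normalizer_map (H := M) H.subtype

theorem isMulCommutative_of_inf_eq_bot_of_sup_eq_top (N C : Subgroup G) [N.Normal] [C.Normal]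
    [IsMulCommutative C] [IsMulCommutative (G ⧸ C)] (hinf : N ⊓ C = ⊥) (hsup : N ⊔ C = ⊤) :
    IsMulCommutative G := by
  have hN : _root_.commutator G ≤ N := Normal.commutator_le_of_self_sup_commutative_eq_top hsup ‹_›
  have hC : _root_.commutator G ≤ C := Normal.quotient_commutative_iff_commutator_le.mp ‹_›
  rw [← commutator_eq_bot_iff, eq_bot_iff, ← hinf]
  exact le_inf hN hC

end Subgroup

theorem IsPGroup.normal_of_index_eq {p : ℕ} (hp : p.Prime) {G : Type*} [Group G] [Finite G]
    (hG : IsPGroup p G) {H : Subgroup G} (hH : H.index = p) : H.Normal := by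
  have : Fact p.Prime := ⟨hp⟩
  obtain ⟨k, hk⟩ := IsPGroup.iff_card.mp hG
  refine Subgroup.normal_of_index_eq_minFac_card ?_
  rcases k with _ | k
  · have : Subsingleton G := (Nat.card_eq_one_iff_unique.mp (by simpa using hk)).1
    rw [Subsingleton.elim H ⊤, Subgroup.index_top] at hH
    exact absurd hH.symm hp.ne_one
  · rw [hk, hp.pow_minFac k.succ_ne_zero, hH]

open Subgroup in
theorem stmt3 {p : ℕ} (hp : p.Prime) {G : Type} [Group G] [Finite G]
    (hG : IsPGroup p G) (A : Subgroup G) (hA : IsMulCommutative A) (hAmax : A.index = p)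
    (H : Subgroup G) (hHmax : H.index = p) (hHnab : ¬ IsMulCommutative H)
    (φ : H →* G)
    (hker : ∀ K : Subgroup G, K.Normal → K ≤ H → K.subgroupOf H ≤ φ.ker → K = ⊥) :
    Function.Injective φ := by
  have : Fact p.Prime := ⟨hp⟩
  have := hG.normal_of_index_eq hp hAmax
  have hAH : A ⊔ H = ⊤ :=
    (isCoatom_of_index_prime (hAmax ▸ hp)).sup_eq_top_of_ne
      (isCoatom_of_index_prime (hHmax ▸ hp)) fun h => hHnab (h ▸ hA)
  set C := A.subgroupOf H
  have hC : C.index = p := by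
    change A.relIndex H = p
    rw [← relIndex_sup_right, sup_comm, hAH, relIndex_top_right, hAmax]
  have hNC : φ.ker ⊓ C = ⊥ := by
    have hK := hker _ (normal_map_subtype_of_le_of_isMulCommutative hAH (φ.ker ⊓ C) inf_le_right)
      (map_subtype_le _)
      (by rw [subgroupOf, comap_map_eq_self_of_injective H.subtype_injective]; exact inf_le_left)
    exact (map_eq_bot_iff_of_injective _ H.subtype_injective).mp hK
  rw [← MonoidHom.ker_eq_bot_iff]
  by_contra hN
  have hsup : φ.ker ⊔ C = ⊤ := by
    rw [sup_comm, ← codisjoint_iff, ← (isCoatom_of_index_prime (hC ▸ hp)).not_le_iff_codisjoint]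
    exact fun hle => hN (by rwa [inf_eq_left.mpr hle] at hNC)
  have : IsCyclic (H ⧸ C) := isCyclic_of_prime_card (hC ▸ C.index_eq_card).symm
  exact hHnab (isMulCommutative_of_inf_eq_bot_of_sup_eq_top _ C hNC hsup)
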